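/- There exist constants C, d > 0 such that for all integers n ≥ 2 and all even integers m ≥ 2, the one-sided error randomized query complexity satisfies R1(g_{n,m}) ≤ C·(n+m)·(log₂(n+m))^d. -/

import Mathlib

open Classical
open scoped ENNReal

set_option maxHeartbeats 1000000

/-! ### Deterministic decision trees -/

inductive DTree (ι σ : Type) : Type
  | leaf (b : Bool) : DTree ι σ
  | node (v : ι) (child : σ → DTree ι σ) : DTree ι σ

namespace DTree

variable {ι σ : Type}

/-- The output of the decision tree on input `x`. -/
def eval (x : ι → σ) : DTree ι σ → Bool
  | leaf b => b
  | node v child => (child (x v)).eval x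

/-- The list of variables queried by the decision tree on input `x`,
in the order they are queried. -/
def queryList (x : ι → σ) : DTree ι σ → List ι
  | leaf _ => []
  | node v child => v :: (child (x v)).queryList x

/-- The cost of the decision tree on input `x`: the number of internal nodes visited. -/
def cost (T : DTree ι σ) (x : ι → σ) : ℕ := (T.queryList x).length

/-- `T` computes `f` if it outputs `f x` on every input `x`. -/
def Computes (T : DTree ι σ) (f : (ι → σ) → Bool) : Prop := ∀ x, T.eval x = f x

end DTree

/-- Deterministic query complexity. -/
noncomputable def detComplexity {ι σ : Type} (f : (ι → σ) → Bool) : ℕ :=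
  sInf {d : ℕ | ∃ T : DTree ι σ, T.Computes f ∧ ∀ x, T.cost x ≤ d}

/-- Expected cost of a randomized decision tree (a distribution over deterministic
decision trees) on input `x`. -/
noncomputable def expCost {ι σ : Type} (μ : PMF (DTree ι σ)) (x : ι → σ) : ℝ≥0∞ :=
  ∑' T : DTree ι σ, μ T * (T.cost x : ℝ≥0∞)

/-- Zero-error (Las Vegas) randomized query complexity. -/
noncomputable def R0query {ι σ : Type} (f : (ι → σ) → Bool) : ℝ≥0∞ :=
  ⨅ μ ∈ {μ : PMF (DTree ι σ) | ∀ T ∈ μ.support, T.Computes f},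
    ⨆ x : ι → σ, expCost μ x

/-- One-sided error randomized query complexity. -/
noncomputable def R1query {ι σ : Type} (f : (ι → σ) → Bool) : ℝ≥0∞ :=
  ⨅ μ ∈ {μ : PMF (DTree ι σ) |
      (∀ x, f x = false → ∀ T ∈ μ.support, T.eval x = false) ∧
      (∀ x, f x = true → 1 / 2 ≤ ∑' T : DTree ι σ, if T.eval x = true then μ T else 0)},
    ⨆ x : ι → σ, expCost μ x

/-- Bounded-error (Monte Carlo) randomized query complexity. -/
noncomputable def Rquery {ι σ : Type} (f : (ι → σ) → Bool) : ℝ≥0∞ :=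
  ⨅ μ ∈ {μ : PMF (DTree ι σ) |
      ∀ x, 9 / 10 ≤ ∑' T : DTree ι σ, if T.eval x = f x then μ T else 0},
    ⨆ x : ι → σ, expCost μ x
/-! ### Quantum query algorithms -/

/-- The standard quantum query oracle `O_x |j,p⟩|w⟩ = |j, p + x_j mod S⟩|w⟩`,
as a matrix. -/
noncomputable def qOracle {V ω : Type} [DecidableEq V] [DecidableEq ω] {S : ℕ}
    (x : V → Fin S) : Matrix (V × Fin S × ω) (V × Fin S × ω) ℂ :=
  fun r c => if r = (c.1, c.2.1 + x c.1, c.2.2) then 1 else 0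

/-- A quantum query algorithm on inputs `x : V → Fin S`, making `queries` queries, with
workspace `Fin (W+1)`, alternating the unitaries `U 0, …, U queries` with the oracle,
and measuring with the projector `P` at the end. -/
structure QAlg (V : Type) [Fintype V] [DecidableEq V] (S : ℕ) [NeZero S] where
  queries : ℕ
  W : ℕ
  init : V
  U : ℕ → Matrix (V × Fin S × Fin (W + 1)) (V × Fin S × Fin (W + 1)) ℂ
  hU : ∀ t, (U t).conjTranspose * U t = 1 ∧ U t * (U t).conjTranspose = 1
  P : Matrix (V × Fin S × Fin (W + 1)) (V × Fin S × Fin (W + 1)) ℂ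
  hP : P.conjTranspose = P ∧ P * P = P

namespace QAlg

variable {V : Type} [Fintype V] [DecidableEq V] {S : ℕ} [NeZero S]

/-- The state of the quantum algorithm after `t` steps on input `x`. -/
noncomputable def state (A : QAlg V S) (x : V → Fin S) :
    ℕ → (V × Fin S × Fin (A.W + 1) → ℂ)
  | 0 => (A.U 0).mulVec fun r => if r = (A.init, 0, 0) then 1 else 0
  | t + 1 => (A.U (t + 1)).mulVec ((qOracle x).mulVec (A.state x t))

/-- The probability that the algorithm accepts input `x`: `‖P |Ψ_x⟩‖²`. -/
noncomputable def acceptProb (A : QAlg V S) (x : V → Fin S) : ℝ :=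
  ∑ r : V × Fin S × Fin (A.W + 1), Complex.normSq (A.P.mulVec (A.state x A.queries) r)

end QAlg

/-- Bounded-error quantum query complexity (for functions over a finite input
alphabet `σ`, identified with `Fin (card σ)` via a fixed bijection). -/
noncomputable def Qquery {V σ : Type} [Fintype V] [DecidableEq V] [Fintype σ] [Nonempty σ]
    (f : (V → σ) → Bool) : ℕ :=
  letI : NeZero (Fintype.card σ) := ⟨Fintype.card_ne_zero⟩
  sInf {t : ℕ | ∃ A : QAlg V (Fintype.card σ), A.queries = t ∧
    ∀ x : V → σ,
      (f x = true → 9 / 10 ≤ A.acceptProb fun j => Fintype.equivFin σ (x j)) ∧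
      (f x = false → A.acceptProb (fun j => Fintype.equivFin σ (x j)) ≤ 1 / 10)}

/-- Exact quantum query complexity. -/
noncomputable def QEquery {V σ : Type} [Fintype V] [DecidableEq V] [Fintype σ] [Nonempty σ]
    (f : (V → σ) → Bool) : ℕ :=
  letI : NeZero (Fintype.card σ) := ⟨Fintype.card_ne_zero⟩
  sInf {t : ℕ | ∃ A : QAlg V (Fintype.card σ), A.queries = t ∧
    ∀ x : V → σ,
      (f x = true → A.acceptProb (fun j => Fintype.equivFin σ (x j)) = 1) ∧
      (f x = false → A.acceptProb (fun j => Fintype.equivFin σ (x j)) = 0)}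

/-- Approximate degree of a boolean function. -/
noncomputable def adeg {ι : Type} (F : (ι → Bool) → Bool) : ℕ :=
  sInf {d : ℕ | ∃ p : MvPolynomial ι ℝ, p.totalDegree ≤ d ∧
    ∀ y : ι → Bool, |MvPolynomial.eval (fun i => if y i then (1 : ℝ) else 0) p -
      (if F y then 1 else 0)| ≤ 1 / 10}
/-! ### The pointer functions of Göös–Pitassi–Watson type -/

/-- A symbol of the input alphabet: a boolean value, a left pointer, a right pointer,
and a back/internal pointer (to a cell or a column, depending on `β`). -/
structure PSym (n m : ℕ) (β : Type) where
  val : Bool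
  lp : Option (Fin n × Fin m)
  rp : Option (Fin n × Fin m)
  bp : Option β
deriving DecidableEq

/-- The all-ones symbol `(1,⊥,⊥,⊥)`. -/
def PSym.one (n m : ℕ) (β : Type) : PSym n m β := ⟨true, none, none, none⟩

/-- The symbol `(0,⊥,⊥,⊥)`. -/
def PSym.zero (n m : ℕ) (β : Type) : PSym n m β := ⟨false, none, none, none⟩

def PSym.equivProd (n m : ℕ) (β : Type) :
    PSym n m β ≃ Bool × Option (Fin n × Fin m) × Option (Fin n × Fin m) × Option β where
  toFun v := (v.val, v.lp, v.rp, v.bp)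
  invFun p := ⟨p.1, p.2.1, p.2.2.1, p.2.2.2⟩
  left_inv _ := rfl
  right_inv _ := rfl

instance {n m : ℕ} {β : Type} [Fintype β] : Fintype (PSym n m β) :=
  Fintype.ofEquiv _ (PSym.equivProd n m β).symm

instance {n m : ℕ} {β : Type} : Nonempty (PSym n m β) := ⟨PSym.one n m β⟩

/-- The sequence of k bits of `j`, most significant first:  the root-to-leaf path
(`false` = left, `true` = right) of the `j`-th leaf in the complete binary tree of depth `k`. -/
def bitsPath (k j : ℕ) : List Bool :=
  ((List.range k).reverse).map fun i => j.testBit i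

/-- The root-to-leaf path of the leaf labeled `j` (0-indexed) in the balanced binary tree
with `m` leaves: the complete binary tree if `m` is a power of 2, and otherwise the complete
binary tree on `2 ^ ⌊log₂ m⌋` leaves with a pair of children added to each of the
`m - 2 ^ ⌊log₂ m⌋` leftmost leaves. -/
def treePath (m j : ℕ) : List Bool :=
  if m - 2 ^ Nat.log 2 m = 0 then bitsPath (Nat.log 2 m) j
  else if j < 2 * (m - 2 ^ Nat.log 2 m) then
    bitsPath (Nat.log 2 m) (j / 2) ++ [j % 2 == 1]
  else bitsPath (Nat.log 2 m) (j - (m - 2 ^ Nat.log 2 m))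

/-- Starting at cell `a` and following the left/right pointers of `x` as prescribed by the
list `p` of moves (`false` = left pointer, `true` = right pointer); returns `none` if a
null pointer is encountered. -/
def followPath {n m : ℕ} {β : Type} (x : Fin n × Fin m → PSym n m β)
    (a : Fin n × Fin m) (p : List Bool) : Option (Fin n × Fin m) :=
  p.foldl (fun acc b => acc.bind fun c => if b then (x c).rp else (x c).lp) (some a)

/-- The conditions for `x` to be a 1-input of `f_{n,m}`, with marked column `b` and special
element `a`: (1) `b` is the unique all-1 column; (2) `a` is the unique cell of column `b`
with `x_a ≠ (1,⊥,⊥,⊥)`; (3) for every column `j ≠ b` the tree path from `a` to the leaf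
labeled `j` exists, and ends at a cell `ℓ_j` of column `j` holding a 0; (4) the back pointer
of each `ℓ_j` points to the column `b`. -/
def fCond (n m : ℕ) (x : Fin n × Fin m → PSym n m (Fin m))
    (b : Fin m) (a : Fin n × Fin m) : Prop :=
  (∀ j : Fin m, (∀ i : Fin n, (x (i, j)).val = true) ↔ j = b) ∧
  a.2 = b ∧
  (∀ i : Fin n, x (i, b) ≠ PSym.one n m (Fin m) ↔ (i, b) = a) ∧
  ∀ j : Fin m, j ≠ b →
    ∃ ℓ : Fin n × Fin m, followPath x a (treePath m j.1) = some ℓ ∧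
      ℓ.2 = j ∧ (x ℓ).val = false ∧ (x ℓ).bp = some b

/-- The pointer function `f_{n,m}`, with back pointers to the marked column. -/
noncomputable def fFun (n m : ℕ) (x : Fin n × Fin m → PSym n m (Fin m)) : Bool :=
  if ∃ b a, fCond n m x b a then true else false

/-- The conditions for `x` to be a 1-input of `g_{n,m}`, with marked column `b` and special
element `a`: (1)–(3) as for `f_{n,m}`, and (4′) the set of columns `j ≠ b` whose highlighted
zero `ℓ_j` has back pointer to `a` has size exactly `m/2`. -/
def gCond (n m : ℕ) (x : Fin n × Fin m → PSym n m (Fin n × Fin m))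
    (b : Fin m) (a : Fin n × Fin m) : Prop :=
  (∀ j : Fin m, (∀ i : Fin n, (x (i, j)).val = true) ↔ j = b) ∧
  a.2 = b ∧
  (∀ i : Fin n, x (i, b) ≠ PSym.one n m (Fin n × Fin m) ↔ (i, b) = a) ∧
  (∀ j : Fin m, j ≠ b →
    ∃ ℓ : Fin n × Fin m, followPath x a (treePath m j.1) = some ℓ ∧
      ℓ.2 = j ∧ (x ℓ).val = false) ∧
  {j : Fin m | j ≠ b ∧ ∃ ℓ : Fin n × Fin m,
      followPath x a (treePath m j.1) = some ℓ ∧ (x ℓ).bp = some a}.ncard = m / 2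

/-- The pointer function `g_{n,m}`, where exactly `m/2` of the highlighted zeroes point
back to the special element. -/
noncomputable def gFun (n m : ℕ) (x : Fin n × Fin m → PSym n m (Fin n × Fin m)) : Bool :=
  if ∃ b a, gCond n m x b a then true else false

/-- Column `j` is good in `x` (for `g_{n,m}`): `x` is a 1-input with marked column `b ≠ j`
and special element `a`, and the highlighted zero of column `j` points back to `a`. -/
def goodColumn (n m : ℕ) (x : Fin n × Fin m → PSym n m (Fin n × Fin m)) (j : Fin m) : Prop :=
  ∃ b a, gCond n m x b a ∧ j ≠ b ∧
    ∃ ℓ : Fin n × Fin m, followPath x a (treePath m j.1) = some ℓ ∧ (x ℓ).bp = some a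

/-- The conditions for `x` to be a 1-input of `h_{k,n,m}`, with marked columns `b 0,…,b (k-1)`
and special elements `a 0,…,a (k-1)`: (1) the `b s` are exactly the all-1 columns; (2) `a s` is
the unique cell of column `b s` with `x_{a s} ≠ (1,⊥,⊥,⊥)`; (3) the internal pointers of the
`a s` form a cycle and all the `a s` have equal left pointers and equal right pointers;
(4) for every non-marked column `j` the tree path from any `a s` to the leaf labeled `j`
exists and ends at a cell `ℓ_j` of column `j` holding a 0. -/
def hCond (k n m : ℕ) (x : Fin n × Fin m → PSym n m (Fin n × Fin m))
    (b : Fin k → Fin m) (a : Fin k → Fin n × Fin m) : Prop :=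
  Function.Injective b ∧
  (∀ j : Fin m, (∀ i : Fin n, (x (i, j)).val = true) ↔ ∃ s, b s = j) ∧
  (∀ s, (a s).2 = b s) ∧
  (∀ s, ∀ i : Fin n, x (i, b s) ≠ PSym.one n m (Fin n × Fin m) ↔ (i, b s) = a s) ∧
  (∀ s : Fin k, (x (a s)).bp = some (a ⟨(s.1 + 1) % k, Nat.mod_lt _ s.pos⟩)) ∧
  (∀ s t : Fin k, (x (a s)).lp = (x (a t)).lp ∧ (x (a s)).rp = (x (a t)).rp) ∧
  ∀ j : Fin m, (∀ s, b s ≠ j) → ∀ s : Fin k,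
    ∃ ℓ : Fin n × Fin m, followPath x (a s) (treePath m j.1) = some ℓ ∧
      ℓ.2 = j ∧ (x ℓ).val = false

/-- The pointer function `h_{k,n,m}` with `k` marked columns and no back pointers. -/
noncomputable def hFun (k n m : ℕ) (x : Fin n × Fin m → PSym n m (Fin n × Fin m)) : Bool :=
  if ∃ b a, hCond k n m x b a then true else false

/-- The hard input `x^ℓ`: cell `(i,j)` holds `(0,⊥,⊥,⊥)` if `i = ℓ j` and `(1,⊥,⊥,⊥)`
otherwise. -/
def xhard (n m : ℕ) (β : Type) (ℓ : Fin m → Fin n) : Fin n × Fin m → PSym n m β :=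
  fun c => if c.1 = ℓ c.2 then PSym.zero n m β else PSym.one n m β

/-- The set of (distinct) cells queried among the first `t` queries of `T` on input `x`. -/
def queriedUpTo {ι σ : Type} [DecidableEq ι] (T : DTree ι σ) (x : ι → σ) (t : ℕ) :
    Finset ι :=
  ((T.queryList x).take t).toFinset
/-! ### The progress measure for the hard distribution `x^ℓ` -/

/-- Column `j` is compromised (for the input `x^ℓ`), given the set `Q` of queried cells:
the zero cell `(ℓ j, j)` has been queried, or more than `n/2` cells of column `j` have been
queried. -/
def compromisedCol (n m : ℕ) (ℓ : Fin m → Fin n) (Q : Finset (Fin n × Fin m))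
    (j : Fin m) : Prop :=
  (ℓ j, j) ∈ Q ∨ n < 2 * (Q.filter fun c => c.2 = j).card

/-- The progress measure `I_t = A_t + (2/n)·B_t` of the decision tree `T` on the input `x^ℓ`
after `t` queries, where `A_t` is the number of compromised columns and `B_t` is the number
of queried cells lying outside compromised columns. -/
noncomputable def Imeasure (n m : ℕ)
    (T : DTree (Fin n × Fin m) (PSym n m (Fin n × Fin m))) (ℓ : Fin m → Fin n) (t : ℕ) : ℝ :=
  ({j : Fin m |
      compromisedCol n m ℓ (queriedUpTo T (xhard n m (Fin n × Fin m) ℓ) t) j}.ncard : ℝ) +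
    (2 / n) * ({c : Fin n × Fin m | c ∈ queriedUpTo T (xhard n m (Fin n × Fin m) ℓ) t ∧
      ¬ compromisedCol n m ℓ (queriedUpTo T (xhard n m (Fin n × Fin m) ℓ) t) c.2}.ncard : ℝ)
/-! ### The balanced binary tree, via root-to-node paths -/

/-- The node set of the balanced binary tree with `m` leaves: each node is identified with
the left/right path from the root to it, so the nodes are exactly the prefixes of the
root-to-leaf paths. -/
def treeNodes (m : ℕ) : Finset (List Bool) :=
  (Finset.range m).biUnion fun j => (treePath m j).inits.toFinset

/-- The leaves of the balanced binary tree with `m` leaves. -/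
def leafNodes (m : ℕ) : Finset (List Bool) :=
  (Finset.range m).image fun j => treePath m j

/-- The internal nodes of the balanced binary tree with `m` leaves. -/
def internalNodes (m : ℕ) : Finset (List Bool) :=
  treeNodes m \ leafNodes m

/-- The subtree rooted at a node `u`: all nodes of which `u` is a prefix. -/
def subtreeOf (m : ℕ) (u : List Bool) : Finset (List Bool) :=
  (treeNodes m).filter fun w => u <+: w

/-! ### The hard distribution for `h_{1,n,m}` -/

/-- A parameter quadruple `(v, π, ℓᴸ, ℓᴺ)` for the hard distribution: a bit `v`, a map `π`
from internal tree nodes to columns, and row maps `ℓᴸ, ℓᴺ` for leaves resp. internal nodes. -/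
abbrev HardQ (n m : ℕ) : Type :=
  Bool × ({u : List Bool // u ∈ internalNodes m} → Fin m) × (Fin m → Fin n) × (Fin m → Fin n)

/-- The valid parameter quadruples: `π` injective and `ℓᴸ j ≠ ℓᴺ j` for all `j`. -/
noncomputable def hardSet (n m : ℕ) : Finset (HardQ n m) :=
  Finset.univ.filter fun q => Function.Injective q.2.1 ∧ ∀ j, q.2.2.1 j ≠ q.2.2.2 j

/-- The column of the root of the tree (`none` if the tree has no internal node). -/
noncomputable def rootCol (n m : ℕ) (q : HardQ n m) : Option (Fin m) :=
  if h : ([] : List Bool) ∈ internalNodes m then some (q.2.1 ⟨[], h⟩) else none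

/-- The cell where a child node `w` of an internal node is placed: internal nodes go to
cell `(ℓᴺ (π w), π w)`, the leaf labeled `j` goes to cell `(ℓᴸ j, j)`, and the removed leaf
(the one labeled by the root's column) yields a null pointer. -/
noncomputable def childCell (n m : ℕ) (q : HardQ n m) (w : List Bool) :
    Option (Fin n × Fin m) :=
  if h : w ∈ internalNodes m then some (q.2.2.2 (q.2.1 ⟨w, h⟩), q.2.1 ⟨w, h⟩)
  else if h2 : ∃ j : Fin m, w = treePath m j.1 ∧ some j ≠ rootCol n m q then
    some (q.2.2.1 (Classical.choose h2), Classical.choose h2)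
  else none

/-- The input of the hard distribution determined by the parameter quadruple `q`:
the internal node `u` of the tree is placed at cell `(ℓᴺ (π u), π u)` with left and right
pointers to the cells of its children, value `v` and a self-loop internal pointer if `u` is
the root, and value 0 otherwise; for `j ≠ π(root)`, the leaf labeled `j` is placed at cell
`(ℓᴸ j, j)` with value 0 and null pointers; all the remaining cells hold `(1,⊥,⊥,⊥)`. -/
noncomputable def hardInput (n m : ℕ) (q : HardQ n m) :
    Fin n × Fin m → PSym n m (Fin n × Fin m) :=
  fun c =>
    if h : ∃ u : {u : List Bool // u ∈ internalNodes m}, q.2.1 u = c.2 ∧ q.2.2.2 c.2 = c.1 then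
      { val := if (Classical.choose h).1 = [] then q.1 else false
        lp := childCell n m q ((Classical.choose h).1 ++ [false])
        rp := childCell n m q ((Classical.choose h).1 ++ [true])
        bp := if (Classical.choose h).1 = [] then some c else none }
    else if some c.2 ≠ rootCol n m q ∧ c.1 = q.2.2.1 c.2 then PSym.zero n m (Fin n × Fin m)
    else PSym.one n m (Fin n × Fin m)

/-- Column `j` directly satisfies (i) or (ii): one of the cells `(ℓᴸ j, j)`, `(ℓᴺ j, j)` has
been queried, or more than half of the cells of column `j` have been queried. -/
def colBad (n m : ℕ) (q : HardQ n m) (Q : Finset (Fin n × Fin m)) (j : Fin m) : Prop :=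
  (q.2.2.1 j, j) ∈ Q ∨ (q.2.2.2 j, j) ∈ Q ∨ n < 2 * (Q.filter fun c => c.2 = j).card

/-- Column `j` is compromised: it satisfies (i) or (ii), or some ancestor `u` of `π⁻¹(j)`
in the tree is such that column `π u` satisfies (i) or (ii). -/
def compromisedCol19 (n m : ℕ) (q : HardQ n m) (Q : Finset (Fin n × Fin m))
    (j : Fin m) : Prop :=
  colBad n m q Q j ∨
  ∃ w u : {u : List Bool // u ∈ internalNodes m}, q.2.1 w = j ∧
    u.1 <+: w.1 ∧ u.1 ≠ w.1 ∧ colBad n m q Q (q.2.1 u)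

/-- The progress measure `I_t = min{A_t + (4·C0·log₂ m / n)·B_t, m/2}` of the decision tree
`D` on the hard-distribution input given by `q` after `t` queries, where `A_t` is the number
of compromised columns and `B_t` the number of queried cells outside compromised columns. -/
noncomputable def Imeasure19 (n m : ℕ) (C0 : ℝ)
    (D : DTree (Fin n × Fin m) (PSym n m (Fin n × Fin m))) (q : HardQ n m) (t : ℕ) : ℝ :=
  min
    (({j : Fin m | compromisedCol19 n m q (queriedUpTo D (hardInput n m q) t) j}.ncard : ℝ) +
      (4 * C0 * Real.logb 2 m / n) *
        ({c : Fin n × Fin m | c ∈ queriedUpTo D (hardInput n m q) t ∧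
          ¬ compromisedCol19 n m q (queriedUpTo D (hardInput n m q) t) c.2}.ncard : ℝ))
    (m / 2)

/-! The algorithm samples a column `j` uniformly. Every cell of column `j` whose back pointer
leads to a cell other than `(1,⊥,⊥,⊥)` proposes that cell as a candidate special element. A
knockout tournament follows, in which `c` eliminates `d` when the path `T(d.2)` from `c` ends at
a 0 in column `d.2`: the special element eliminates every candidate outside the marked column,
the only candidate inside it is the special element itself, and nobody eliminates it since its
column holds only 1s. The winner is verified exhaustively with `n + O(m log m)` queries, so
0-inputs are never accepted, while a 1-input is accepted whenever `j ∈ G`, an event of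
probability `|G| / m = 1/2`. Every run makes `O((n + m) log m)` queries. -/

theorem R1query_le_of_uniform {ι σ κ : Type} [Fintype κ] [Nonempty κ]
    (f : (ι → σ) → Bool) (T : κ → DTree ι σ) (B : ℕ)
    (hcost : ∀ k x, (T k).cost x ≤ B)
    (hsound : ∀ k x, (T k).eval x = true → f x = true)
    (hcomplete : ∀ x, f x = true → Nat.card κ ≤ 2 * {k | (T k).eval x = true}.ncard) :
    R1query f ≤ B := by
  set μ := (PMF.uniformOfFintype κ).map T
  have hsupp : ∀ D ∈ μ.support, ∃ k, T k = D := by simp [μ, PMF.support_map]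
  have hzero : ∀ x, f x = false → ∀ D ∈ μ.support, D.eval x = false := by
    intro x hx D hD
    obtain ⟨k, rfl⟩ := hsupp D hD
    by_contra h
    simp [hsound k x (by simpa using h)] at hx
  have hone : ∀ x, f x = true → 1 / 2 ≤ ∑' D, if D.eval x = true then μ D else 0 := by
    intro x hx
    have hprob : (∑' D, if D.eval x = true then μ D else 0) =
        μ.toOuterMeasure {D | D.eval x = true} := by
      rw [PMF.toOuterMeasure_apply]
      exact tsum_congr fun D => by simp [Set.indicator]
    rw [hprob, PMF.toOuterMeasure_map_apply, PMF.toOuterMeasure_uniformOfFintype_apply,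
      ENNReal.le_div_iff_mul_le (by simp) (by simp), ← Nat.card_eq_fintype_card,
      ← Nat.card_eq_fintype_card, Nat.card_coe_set_eq, Set.preimage_ofPred_eq]
    calc 1 / 2 * (Nat.card κ : ℝ≥0∞) ≤ 1 / 2 * (2 * {k | (T k).eval x = true}.ncard) := by
          gcongr; exact_mod_cast hcomplete x hx
      _ = {k | (T k).eval x = true}.ncard := by
          rw [← mul_assoc, ENNReal.div_mul_cancel two_ne_zero ENNReal.ofNat_ne_top, one_mul]
  refine (iInf₂_le μ ⟨hzero, hone⟩).trans (iSup_le fun x => ?_)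
  calc expCost μ x = ∑' D, μ D * (D.cost x : ℝ≥0∞) := rfl
    _ ≤ ∑' D, μ D * (B : ℝ≥0∞) := ENNReal.tsum_le_tsum fun D => by
        by_cases hD : D ∈ μ.support
        · obtain ⟨k, rfl⟩ := hsupp D hD
          exact mul_le_mul_right (by exact_mod_cast hcost k x) _
        · simp [(PMF.mem_support_iff _ _).not_left.mp hD]
    _ = B := by rw [ENNReal.tsum_mul_right, PMF.tsum_coe, one_mul]

/-- Query algorithms as a free monad, so that they can be written in `do` notation; `toDTree`
compiles them to decision trees. -/
inductive QueryProg (ι σ α : Type) : Type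
  | ret (a : α)
  | query (v : ι) (k : σ → QueryProg ι σ α)

namespace QueryProg

variable {ι σ α β : Type}

def bind : QueryProg ι σ α → (α → QueryProg ι σ β) → QueryProg ι σ β
  | ret a, f => f a
  | query v k, f => query v fun s => (k s).bind f

instance : Monad (QueryProg ι σ) where
  pure := ret
  bind := bind

instance : LawfulMonad (QueryProg ι σ) := LawfulMonad.mk' _
  (fun p => by
    induction p with
    | ret a => rfl
    | query v k ih => exact congrArg (query v) (funext ih))
  (fun _ _ => rfl)
  (fun p f g => by
    induction p with
    | ret a => rfl
    | query v k ih => exact congrArg (query v) (funext ih))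

def ask (v : ι) : QueryProg ι σ σ := query v ret

def run (x : ι → σ) : QueryProg ι σ α → α
  | ret a => a
  | query v k => (k (x v)).run x

def cost (x : ι → σ) : QueryProg ι σ α → ℕ
  | ret _ => 0
  | query v k => (k (x v)).cost x + 1

def toDTree : QueryProg ι σ Bool → DTree ι σ
  | ret b => .leaf b
  | query v k => .node v fun s => (k s).toDTree

variable (x : ι → σ)

@[simp] lemma run_pure (a : α) : (pure a : QueryProg ι σ α).run x = a := rfl

@[simp] lemma run_ask (v : ι) : (ask v : QueryProg ι σ σ).run x = x v := rfl

@[simp] lemma run_bind (p : QueryProg ι σ α) (f : α → QueryProg ι σ β) :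
    (p >>= f).run x = (f (p.run x)).run x := by
  induction p with
  | ret a => rfl
  | query v k ih => exact ih (x v)

@[simp] lemma run_map (f : α → β) (p : QueryProg ι σ α) : (f <$> p).run x = f (p.run x) := by
  rw [← bind_pure_comp, run_bind]
  rfl

@[simp] lemma run_mapM (f : α → QueryProg ι σ β) (l : List α) :
    (l.mapM f).run x = l.map fun a => (f a).run x := by
  induction l with
  | nil => rfl
  | cons a l ih => simp [List.mapM_cons, ih]

@[simp] lemma run_foldlM (f : β → α → QueryProg ι σ β) (l : List α) (b : β) :
    (l.foldlM f b).run x = l.foldl (fun b a => (f b a).run x) b := by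
  induction l generalizing b with
  | nil => rfl
  | cons a l ih => simp [List.foldlM_cons, ih]

@[simp] lemma cost_pure (a : α) : (pure a : QueryProg ι σ α).cost x = 0 := rfl

@[simp] lemma cost_ask (v : ι) : (ask v : QueryProg ι σ σ).cost x = 1 := rfl

@[simp] lemma cost_bind (p : QueryProg ι σ α) (f : α → QueryProg ι σ β) :
    (p >>= f).cost x = p.cost x + (f (p.run x)).cost x := by
  induction p with
  | ret a => exact (zero_add _).symm
  | query v k ih =>
    show (k (x v) >>= f).cost x + 1 = (k (x v)).cost x + 1 + (f ((k (x v)).run x)).cost x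
    rw [ih]
    omega

@[simp] lemma cost_map (f : α → β) (p : QueryProg ι σ α) : (f <$> p).cost x = p.cost x := by
  rw [← bind_pure_comp, cost_bind]
  rfl

lemma cost_mapM_le (f : α → QueryProg ι σ β) (l : List α) (K : ℕ)
    (hf : ∀ a ∈ l, (f a).cost x ≤ K) : (l.mapM f).cost x ≤ l.length * K := by
  induction l with
  | nil => simp
  | cons a l ih =>
    simp only [List.mapM_cons, cost_bind, cost_pure, List.length_cons]
    have := ih fun a' ha' => hf a' (List.mem_cons_of_mem a ha')
    have := hf a List.mem_cons_self
    nlinarith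

lemma cost_foldlM_le (f : β → α → QueryProg ι σ β) (l : List α) (K : ℕ)
    (hf : ∀ b, ∀ a ∈ l, (f b a).cost x ≤ K) (b : β) : (l.foldlM f b).cost x ≤ l.length * K := by
  induction l generalizing b with
  | nil => simp [List.foldlM]
  | cons a l ih =>
    simp only [List.foldlM_cons, cost_bind, List.length_cons]
    have := ih (fun b a' ha' => hf b a' (List.mem_cons_of_mem a ha')) ((f b a).run x)
    have := hf b a List.mem_cons_self
    nlinarith

@[simp] lemma eval_toDTree (p : QueryProg ι σ Bool) : p.toDTree.eval x = p.run x := by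
  induction p with
  | ret b => rfl
  | query v k ih => exact ih (x v)

@[simp] lemma cost_toDTree (p : QueryProg ι σ Bool) : p.toDTree.cost x = p.cost x := by
  induction p with
  | ret b => rfl
  | query v k ih => exact congrArg (· + 1) (ih (x v))

end QueryProg

lemma ncard_setOf_eq_countP_finRange {m : ℕ} (p : Fin m → Prop) [DecidablePred p] :
    {j | p j}.ncard = (List.finRange m).countP (fun j => decide (p j)) := by
  rw [Set.ncard_eq_toFinset_card', Set.toFinset_ofPred, ← (List.nodup_finRange m).card_eq_countP,
    List.toFinset_finRange]

lemma length_treePath_le (m j : ℕ) : (treePath m j).length ≤ Nat.log 2 m + 1 := by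
  unfold treePath
  split_ifs <;> simp [bitsPath]

lemma add_mul_natLog_add_five_le {n m : ℕ} (hn : 2 ≤ n) (hm : 2 ≤ m) :
    (((n + m) * (Nat.log 2 m + 5) : ℕ) : ℝ) ≤ 4 * (n + m) * Real.logb 2 (n + m) := by
  have hsum : (4 : ℝ) ≤ n + m := by exact_mod_cast (by omega : 4 ≤ n + m)
  have hlog : 2 ≤ Real.logb 2 (n + m) := by
    rw [Real.le_logb_iff_rpow_le one_lt_two (by linarith)]
    norm_num [hsum]
  have hlogm : (Nat.log 2 m : ℝ) ≤ Real.logb 2 (n + m) :=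
    (Real.natLog_le_logb m 2).trans (Real.logb_le_logb_of_le one_lt_two
      (by exact_mod_cast (by omega : 0 < m)) (by simp))
  push_cast
  nlinarith

namespace GPointer

abbrev Cell (n m : ℕ) : Type := Fin n × Fin m

abbrev Symbol (n m : ℕ) : Type := PSym n m (Fin n × Fin m)

abbrev Prog (n m : ℕ) : Type → Type := QueryProg (Cell n m) (Symbol n m)

open QueryProg

variable {n m : ℕ}

def followPathProg (a : Cell n m) (p : List Bool) : Prog n m (Option (Cell n m)) :=
  p.foldlM (fun acc d => match acc with
    | none => pure none
    | some c => (fun s => if d then s.rp else s.lp) <$> ask c) (some a)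

def zeroLeaf (x : Cell n m → Symbol n m) (c : Cell n m) (j : Fin m) : Option (Cell n m) :=
  (followPath x c (treePath m j)).filter fun ℓ => ℓ.2 = j ∧ (x ℓ).val = false

def zeroLeafProg (c : Cell n m) (j : Fin m) : Prog n m (Option (Symbol n m)) := do
  match ← followPathProg c (treePath m j) with
  | none => pure none
  | some ℓ => (fun s => if ℓ.2 = j ∧ s.val = false then some s else none) <$> ask ℓ

def candidate (j : Fin m) (i : Fin n) : Prog n m (Option (Cell n m)) := do
  match (← ask (i, j)).bp with
  | none => pure none
  | some a => (fun s => if s = PSym.one n m _ then none else some a) <$> ask a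

def tournamentStep (champ c : Cell n m) : Prog n m (Cell n m) :=
  (fun r => if r.isSome then champ else c) <$> zeroLeafProg champ c.2

def checkCell (a : Cell n m) (i : Fin n) : Prog n m Bool :=
  (fun s => decide (((i, a.2) = a ↔ s ≠ PSym.one n m _) ∧ s.val = true)) <$> ask (i, a.2)

def verify (a : Cell n m) : Prog n m Bool := do
  let col ← (List.finRange n).mapM (checkCell a)
  let leaves ← ((List.finRange m).filter (· ≠ a.2)).mapM (zeroLeafProg a)
  pure (col.all id && leaves.all Option.isSome &&
    leaves.countP (Option.any (·.bp == some a)) == m / 2)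

def columnAlg (j : Fin m) : Prog n m Bool := do
  match (← (List.finRange n).mapM (candidate j)).reduceOption with
  | [] => pure false
  | c :: cs => cs.foldlM tournamentStep c >>= verify

section Semantics

variable (x : Cell n m → Symbol n m)

@[simp] lemma run_followPathProg (a : Cell n m) (p : List Bool) :
    (followPathProg a p).run x = followPath x a p := by
  simp only [followPathProg, followPath, run_foldlM]
  congr 1
  funext acc d
  cases acc <;> simp

@[simp] lemma run_zeroLeafProg (c : Cell n m) (j : Fin m) :
    (zeroLeafProg c j).run x = (zeroLeaf x c j).map x := by
  simp only [zeroLeafProg, zeroLeaf, run_bind, run_followPathProg]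
  cases followPath x c (treePath m j) with
  | none => rfl
  | some ℓ => by_cases h : ℓ.2 = j ∧ (x ℓ).val = false <;> simp [Option.filter, h]

@[simp] lemma run_candidate (j : Fin m) (i : Fin n) :
    (candidate j i).run x = (x (i, j)).bp.filter fun a => x a ≠ PSym.one n m _ := by
  simp only [candidate, run_bind, run_ask]
  cases (x (i, j)).bp with
  | none => rfl
  | some a => by_cases h : x a = PSym.one n m _ <;> simp [Option.filter, h]

@[simp] lemma run_tournamentStep (champ c : Cell n m) :
    (tournamentStep champ c).run x = if (zeroLeaf x champ c.2).isSome then champ else c := by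
  simp [tournamentStep]

lemma run_verify (a : Cell n m) : (verify a).run x = true ↔
    (∀ i, ((i, a.2) = a ↔ x (i, a.2) ≠ PSym.one n m _) ∧ (x (i, a.2)).val = true) ∧
    (∀ j ≠ a.2, (zeroLeaf x a j).isSome) ∧
    {j | j ≠ a.2 ∧ ∃ ℓ, zeroLeaf x a j = some ℓ ∧ (x ℓ).bp = some a}.ncard = m / 2 := by
  simp only [verify, checkCell, run_bind, run_pure, run_mapM, run_map, run_ask, run_zeroLeafProg,
    Bool.and_eq_true, beq_iff_eq, and_assoc]
  refine and_congr ?_ (and_congr (by simp [imp_iff_not_or]) ?_)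
  · simp only [List.all_map, List.all_eq_true, List.mem_finRange, Function.comp_apply, id,
      forall_const]
    exact forall_congr' fun i => decide_eq_true_iff
  · rw [ncard_setOf_eq_countP_finRange, List.countP_map, List.countP_filter]
    refine Eq.congr_left (List.countP_congr fun j _ => ?_)
    cases h : zeroLeaf x a j <;> simp [h, and_comm]

lemma isSome_zeroLeaf_iff (c : Cell n m) (j : Fin m) : (zeroLeaf x c j).isSome ↔
    ∃ ℓ, followPath x c (treePath m j) = some ℓ ∧ ℓ.2 = j ∧ (x ℓ).val = false := by
  rw [zeroLeaf, Option.isSome_iff_exists]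
  simp [Option.filter_eq_some_iff]

end Semantics

section Correctness

variable (x : Cell n m → Symbol n m) {a : Cell n m}

lemma setOf_zeroLeaf_eq (hleaf : ∀ j ≠ a.2, (zeroLeaf x a j).isSome) :
    {j | j ≠ a.2 ∧ ∃ ℓ, zeroLeaf x a j = some ℓ ∧ (x ℓ).bp = some a} =
      {j | j ≠ a.2 ∧ ∃ ℓ, followPath x a (treePath m j) = some ℓ ∧ (x ℓ).bp = some a} := by
  ext j
  refine and_congr_right fun hj => ?_
  obtain ⟨ℓ, hℓ, hcol, hval⟩ := (isSome_zeroLeaf_iff x a j).1 (hleaf j hj)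
  have : zeroLeaf x a j = some ℓ := by simp [zeroLeaf, hℓ, hcol, hval]
  simp [this, hℓ]

theorem run_verify_iff_gCond : (verify a).run x = true ↔ gCond n m x a.2 a := by
  rw [run_verify]
  constructor
  · rintro ⟨hcol, hleaf, hcount⟩
    refine ⟨fun j => ⟨fun hval => ?_, ?_⟩, rfl, fun i => (hcol i).1.symm,
      fun j hj => (isSome_zeroLeaf_iff x a j).1 (hleaf j hj), ?_⟩
    · by_contra hj
      obtain ⟨ℓ, -, rfl, hℓ⟩ := (isSome_zeroLeaf_iff x a j).1 (hleaf j hj)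
      simp [hval ℓ.1] at hℓ
    · rintro rfl i
      exact (hcol i).2
    · rwa [← setOf_zeroLeaf_eq x hleaf]
  · rintro ⟨hmarked, -, hspecial, hpath, hG⟩
    have hleaf : ∀ j ≠ a.2, (zeroLeaf x a j).isSome :=
      fun j hj => (isSome_zeroLeaf_iff x a j).2 (hpath j hj)
    exact ⟨fun i => ⟨(hspecial i).symm, (hmarked a.2).2 rfl i⟩, hleaf,
      by rwa [setOf_zeroLeaf_eq x hleaf]⟩

variable {b : Fin m}

lemma ne_one_iff_eq_special (hg : gCond n m x b a) {c : Cell n m} (hc : c.2 = b) :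
    x c ≠ PSym.one n m _ ↔ c = a := by
  obtain ⟨i, j⟩ := c
  obtain rfl : j = b := hc
  exact hg.2.2.1 i

lemma run_tournamentStep_special_left (hg : gCond n m x b a) {c : Cell n m}
    (hc : x c ≠ PSym.one n m _) : (tournamentStep a c).run x = a := by
  by_cases hcb : c.2 = b
  · obtain rfl := (ne_one_iff_eq_special x hg hcb).1 hc
    simp
  · simp [(isSome_zeroLeaf_iff x a c.2).2 (hg.2.2.2.1 c.2 hcb)]

lemma run_tournamentStep_special_right (hg : gCond n m x b a) (c : Cell n m) :
    (tournamentStep c a).run x = a := by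
  suffices ¬ (zeroLeaf x c a.2).isSome by simp [this]
  intro hsome
  obtain ⟨⟨i, k⟩, -, rfl, hval⟩ := (isSome_zeroLeaf_iff x c a.2).1 hsome
  rw [hg.2.1, (hg.1 b).2 rfl i] at hval
  exact Bool.noConfusion hval

lemma foldl_tournamentStep_eq_special (hg : gCond n m x b a) (l : List (Cell n m))
    (hl : ∀ c ∈ l, x c ≠ PSym.one n m _) (champ : Cell n m) (h : champ = a ∨ a ∈ l) :
    l.foldl (fun champ c => (tournamentStep champ c).run x) champ = a := by
  induction l generalizing champ with
  | nil => simpa using h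
  | cons c l ih =>
    refine ih (fun c hc => hl c (List.mem_cons_of_mem _ hc)) _ ?_
    rcases h with rfl | h
    · exact .inl (run_tournamentStep_special_left x hg (hl c List.mem_cons_self))
    rcases List.mem_cons.1 h with rfl | ha
    · exact .inl (run_tournamentStep_special_right x hg champ)
    · exact .inr ha

lemma gFun_eq_true_iff : gFun n m x = true ↔ ∃ b a, gCond n m x b a := by
  simp [gFun]

theorem gFun_of_run_columnAlg {j : Fin m} (h : (columnAlg j).run x = true) :
    gFun n m x = true := by
  simp only [columnAlg, run_bind] at h
  split at h
  · simp at h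
  · rw [run_bind] at h
    exact (gFun_eq_true_iff x).2 ⟨_, _, (run_verify_iff_gCond x).1 h⟩

theorem run_columnAlg_of_goodColumn {j : Fin m} (h : goodColumn n m x j) :
    (columnAlg j).run x = true := by
  obtain ⟨b, a, hg, hjb, ℓ, hℓ, hbp⟩ := h
  have hcands : ∀ c ∈ (((List.finRange n).mapM (candidate j)).run x).reduceOption,
      x c ≠ PSym.one n m _ := by
    simp [List.reduceOption_mem_iff, Option.filter_eq_some_iff]
  have ha : a ∈ (((List.finRange n).mapM (candidate j)).run x).reduceOption := by
    obtain ⟨ℓ', hℓ', hcol, -⟩ := hg.2.2.2.1 j hjb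
    obtain rfl : ℓ' = ℓ := Option.some_injective _ (hℓ'.symm.trans hℓ)
    simp only [run_mapM, run_candidate, List.reduceOption_mem_iff, List.mem_map,
      List.mem_finRange, true_and, Option.filter_eq_some_iff]
    exact ⟨ℓ'.1, by rwa [← hcol], by simpa using (ne_one_iff_eq_special x hg hg.2.1).2 rfl⟩
  simp only [columnAlg, run_bind]
  split
  · next heq => exact absurd (heq ▸ ha) List.not_mem_nil
  · next c cs heq =>
    rw [heq] at ha hcands
    rw [run_bind, run_foldlM, foldl_tournamentStep_eq_special x hg cs
      (fun c hc => hcands c (List.mem_cons_of_mem _ hc)) c ((List.mem_cons.1 ha).imp_left Eq.symm),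
      run_verify_iff_gCond, hg.2.1]
    exact hg

theorem le_two_mul_ncard_run_columnAlg (hm : Even m) (hx : gFun n m x = true) :
    m ≤ 2 * {j | (columnAlg j).run x = true}.ncard := by
  obtain ⟨b, a, hg⟩ := (gFun_eq_true_iff x).1 hx
  have hG : {j | j ≠ b ∧ ∃ ℓ, followPath x a (treePath m j) = some ℓ ∧ (x ℓ).bp = some a} ⊆
      {j | (columnAlg j).run x = true} :=
    fun j ⟨hjb, hℓ⟩ => run_columnAlg_of_goodColumn x ⟨b, a, hg, hjb, hℓ⟩
  have := Set.ncard_le_ncard hG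
  rw [hg.2.2.2.2] at this
  obtain ⟨k, rfl⟩ := hm
  omega

end Correctness

section Cost

variable (x : Cell n m → Symbol n m)

lemma cost_followPathProg_le (a : Cell n m) (p : List Bool) :
    (followPathProg a p).cost x ≤ p.length := by
  unfold followPathProg
  simpa using cost_foldlM_le x _ p 1 (fun acc d _ => by cases acc <;> simp) (some a)

lemma cost_zeroLeafProg_le (c : Cell n m) (j : Fin m) :
    (zeroLeafProg c j).cost x ≤ Nat.log 2 m + 2 := by
  have := (cost_followPathProg_le x c (treePath m j)).trans (length_treePath_le m j)
  simp only [zeroLeafProg, cost_bind, run_followPathProg]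
  split <;> simp <;> omega

lemma cost_candidate_le (j : Fin m) (i : Fin n) : (candidate j i).cost x ≤ 2 := by
  simp only [candidate, cost_bind, cost_ask]
  split <;> simp

lemma cost_tournamentStep_le (champ c : Cell n m) :
    (tournamentStep champ c).cost x ≤ Nat.log 2 m + 2 := by
  simpa [tournamentStep] using cost_zeroLeafProg_le x champ c.2

lemma cost_verify_le (a : Cell n m) : (verify a).cost x ≤ n + m * (Nat.log 2 m + 2) := by
  have hcol := cost_mapM_le x (checkCell a) (List.finRange n) 1 fun i _ => by simp [checkCell]
  have hleaves := cost_mapM_le x (zeroLeafProg a) ((List.finRange m).filter (· ≠ a.2)) _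
    fun j _ => cost_zeroLeafProg_le x a j
  have hlen : ((List.finRange m).filter (· ≠ a.2)).length ≤ m :=
    (List.length_filter_le _ _).trans (List.length_finRange ..).le
  simp only [verify, cost_bind, cost_pure, List.length_finRange, mul_one] at hcol ⊢
  nlinarith

theorem cost_columnAlg_le (j : Fin m) : (columnAlg j).cost x ≤ (n + m) * (Nat.log 2 m + 5) := by
  have hcands : ((List.finRange n).mapM (candidate j)).cost x ≤ n * 2 := by
    simpa using cost_mapM_le x (candidate j) (List.finRange n) 2 fun i _ => cost_candidate_le x j i
  have hlen : (((List.finRange n).mapM (candidate j)).run x).reduceOption.length ≤ n :=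
    (List.reduceOption_length_le _).trans (by simp)
  simp only [columnAlg, cost_bind]
  split
  · simp only [cost_pure]
    nlinarith
  · next c cs heq =>
    have htour := cost_foldlM_le x tournamentStep cs _
      (fun champ c _ => cost_tournamentStep_le x champ c) c
    have hverify := cost_verify_le x ((cs.foldlM tournamentStep c).run x)
    rw [heq, List.length_cons] at hlen
    rw [cost_bind]
    nlinarith

end Cost

end GPointer

/-- `R1(g_{n,m}) = Õ(n + m)`. -/
theorem statement8 :
    ∃ C d : ℝ, 0 < C ∧ 0 < d ∧ ∀ n m : ℕ, 2 ≤ n → 2 ≤ m → Even m →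
      R1query (gFun n m) ≤
        ENNReal.ofReal (C * ((n : ℝ) + m) * Real.logb 2 ((n : ℝ) + m) ^ d) := by
  refine ⟨4, 1, by norm_num, by norm_num, fun n m hn hm hev => ?_⟩
  have : Nonempty (Fin m) := ⟨⟨0, by omega⟩⟩
  calc R1query (gFun n m) ≤ ((n + m) * (Nat.log 2 m + 5) : ℕ) :=
        R1query_le_of_uniform _ (fun j => (GPointer.columnAlg j).toDTree) _
          (fun j x => by simpa using GPointer.cost_columnAlg_le x j)
          (fun j x h => GPointer.gFun_of_run_columnAlg x (by simpa using h))
          (fun x hx => by simpa using GPointer.le_two_mul_ncard_run_columnAlg x hev hx)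
    _ ≤ _ := by
        rw [Real.rpow_one, ← ENNReal.ofReal_natCast]
        exact ENNReal.ofReal_le_ofReal (add_mul_natLog_add_five_le hn hm)
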